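/- Let (Δ₁, Δ₂) be a good pair of polytopes in M_ℚ and let M' ⊆ M be a finite-index sublattice such that all vertices of Δ₁ lie in M'. Then (Δ₁, Δ₂) is a good pair with respect to the lattice M' (with polar taken in the dual lattice N' ⊇ N). -/

import Mathlib

open Finset

variable {d : ℕ}

noncomputable section

/-- The standard pairing on `ℝ^d`. -/
def pairR (x y : Fin d → ℝ) : ℝ := ∑ i, x i * y i

/-- The polar of a subset of `ℝ^d`. -/
def polar (Δ : Set (Fin d → ℝ)) : Set (Fin d → ℝ) :=
  {y | ∀ x ∈ Δ, pairR x y ≥ -1}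

/-- A point of the standard lattice `ℤ^d ⊆ ℝ^d`. -/
def IsLatticePt (x : Fin d → ℝ) : Prop := ∀ i, ∃ z : ℤ, x i = (z : ℝ)

/-- A polytope: the convex hull of finitely many points. -/
def IsPolytope (Δ : Set (Fin d → ℝ)) : Prop :=
  ∃ S : Finset (Fin d → ℝ), Δ = convexHull ℝ (S : Set (Fin d → ℝ))

/-- A lattice polytope: the convex hull of finitely many lattice points. -/
def IsLatticePolytope (Δ : Set (Fin d → ℝ)) : Prop :=
  ∃ S : Finset (Fin d → ℝ), (∀ x ∈ S, IsLatticePt x) ∧ Δ = convexHull ℝ (S : Set (Fin d → ℝ))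

/-- A canonical polytope: a lattice polytope whose unique interior lattice point
is the origin. -/
def IsCanonical (Δ : Set (Fin d → ℝ)) : Prop :=
  IsLatticePolytope Δ ∧ (0 : Fin d → ℝ) ∈ interior Δ ∧
    ∀ x ∈ interior Δ, IsLatticePt x → x = 0

/-- A good pair: `Δ₁ ⊆ Δ₂` with `Δ₁` and `Δ₂*` canonical. -/
def IsGoodPair (Δ₁ Δ₂ : Set (Fin d → ℝ)) : Prop :=
  Δ₁ ⊆ Δ₂ ∧ IsCanonical Δ₁ ∧ IsCanonical (polar Δ₂)

/-- The dual lattice of a subset `L ⊆ ℝ^d`: vectors pairing integrally with `L`. -/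
def dualLattice (L : Set (Fin d → ℝ)) : Set (Fin d → ℝ) :=
  {y | ∀ x ∈ L, ∃ z : ℤ, pairR x y = (z : ℝ)}

/-- A polytope with vertices in the sub"lattice" `L`. -/
def IsLatticePolytopeIn (L Δ : Set (Fin d → ℝ)) : Prop :=
  ∃ S : Finset (Fin d → ℝ), (S : Set (Fin d → ℝ)) ⊆ L ∧
    Δ = convexHull ℝ (S : Set (Fin d → ℝ))

/-- Canonical with respect to the lattice `L`. -/
def IsCanonicalIn (L Δ : Set (Fin d → ℝ)) : Prop :=
  IsLatticePolytopeIn L Δ ∧ (0 : Fin d → ℝ) ∈ interior Δ ∧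
    ∀ x ∈ interior Δ, x ∈ L → x = 0

/-- Good pair with respect to a lattice `L` and its dual lattice `Ldual`. -/
def IsGoodPairIn (L Ldual Δ₁ Δ₂ : Set (Fin d → ℝ)) : Prop :=
  Δ₁ ⊆ Δ₂ ∧ IsCanonicalIn L Δ₁ ∧ IsCanonicalIn Ldual (polar Δ₂)

/-- The standard lattice `ℤ^d ⊆ ℝ^d` as a set. -/
def stdLattice (d : ℕ) : Set (Fin d → ℝ) := {x | ∀ i, ∃ z : ℤ, x i = (z : ℝ)}

/-!
Passing from `M` to `M' ⊆ M` can only lose interior lattice points of `Δ₁`, and the vertices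
of `Δ₂*` stay in `N ⊆ N'`. The content is that an interior point `y` of `Δ₂* ⊆ Δ₁*` lying in
`N'` is `0`: since `(1 + t) y ∈ Δ₁*` for small `t > 0`, each vertex of `Δ₁` pairs with `y` to an
integer `> -1`, hence `≥ 0`; so `y` is nonnegative on all of `Δ₁`, which contains `-t y`.
-/

open Topology in
lemma exists_pos_add_smul_mem_of_mem_interior {E : Type*} [AddCommGroup E] [Module ℝ E]
    [TopologicalSpace E] [ContinuousAdd E] [ContinuousSMul ℝ E] {K : Set E} {y : E}
    (hy : y ∈ interior K) (w : E) : ∃ t : ℝ, 0 < t ∧ y + t • w ∈ K := by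
  have hcont : Continuous fun t : ℝ => y + t • w := by fun_prop
  have hnear : ∀ᶠ t in 𝓝 (0 : ℝ), y + t • w ∈ K :=
    hcont.continuousAt.eventually_mem (by simpa using mem_interior_iff_mem_nhds.1 hy)
  exact ((hnear.filter_mono nhdsWithin_le_nhds).and
    (self_mem_nhdsWithin : Set.Ioi (0 : ℝ) ∈ 𝓝[>] 0)).exists.imp fun t ht => ⟨ht.2, ht.1⟩

lemma pairR_eq_dotProduct (x y : Fin d → ℝ) : pairR x y = x ⬝ᵥ y := rfl

lemma polar_anti {A B : Set (Fin d → ℝ)} (h : A ⊆ B) : polar B ⊆ polar A :=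
  fun _ hy x hx => hy x (h hx)

lemma stdLattice_subset_dualLattice {L : Set (Fin d → ℝ)} (hL : L ⊆ stdLattice d) :
    stdLattice d ⊆ dualLattice L := by
  intro y hy x hx
  choose a ha using hL hx
  choose b hb using hy
  exact ⟨∑ i, a i * b i, by simp [pairR, ha, hb]⟩

lemma pairR_nonneg_of_mem_interior_polar {Δ : Set (Fin d → ℝ)} {v y : Fin d → ℝ}
    (hv : v ∈ Δ) (hy : y ∈ interior (polar Δ)) (hvy : ∃ z : ℤ, pairR v y = z) :
    0 ≤ pairR v y := by
  obtain ⟨t, ht, hmem⟩ := exists_pos_add_smul_mem_of_mem_interior hy y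
  have hgt : -1 < pairR v y := by
    have h := hmem v hv
    rw [pairR_eq_dotProduct, dotProduct_add, dotProduct_smul, smul_eq_mul] at h
    rw [pairR_eq_dotProduct]
    nlinarith
  obtain ⟨z, hz⟩ := hvy
  rw [hz] at hgt ⊢
  exact_mod_cast (show (-1 : ℤ) < z by exact_mod_cast hgt)

lemma eq_zero_of_mem_interior_polar_of_mem_dualLattice {L Δ : Set (Fin d → ℝ)} {y : Fin d → ℝ}
    (hΔ : IsLatticePolytopeIn L Δ) (h0 : (0 : Fin d → ℝ) ∈ interior Δ)
    (hy : y ∈ interior (polar Δ)) (hyL : y ∈ dualLattice L) : y = 0 := by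
  obtain ⟨S, hSL, rfl⟩ := hΔ
  have hvert : ∀ v ∈ (S : Set (Fin d → ℝ)), 0 ≤ v ⬝ᵥ y := fun v hv =>
    pairR_nonneg_of_mem_interior_polar (subset_convexHull ℝ _ hv) hy (hyL v (hSL hv))
  have hhalf : Convex ℝ {x : Fin d → ℝ | 0 ≤ x ⬝ᵥ y} :=
    convex_halfSpace_ge ⟨fun a b => add_dotProduct a b y, fun c x => smul_dotProduct c x y⟩ 0
  obtain ⟨t, ht, hmem⟩ := exists_pos_add_smul_mem_of_mem_interior h0 (-y)
  have hneg : 0 ≤ (0 + t • -y) ⬝ᵥ y := convexHull_min hvert hhalf hmem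
  rw [zero_add, smul_dotProduct, neg_dotProduct, smul_eq_mul] at hneg
  have hself : 0 ≤ y ⬝ᵥ y := by simpa using dotProduct_star_self_nonneg y
  exact dotProduct_self_eq_zero.1 (le_antisymm (by nlinarith) hself)

theorem stmt7_general (Δ₁ Δ₂ : Set (Fin d → ℝ)) (L' : Set (Fin d → ℝ))
    (hsub : L' ⊆ stdLattice d)
    (hgood : IsGoodPairIn (stdLattice d) (stdLattice d) Δ₁ Δ₂)
    (hvert : IsLatticePolytopeIn L' Δ₁) :
    IsGoodPairIn L' (dualLattice L') Δ₁ Δ₂ := by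
  obtain ⟨h12, ⟨-, h01, hcan1⟩, ⟨S, hS, hpolar⟩, h0P, -⟩ := hgood
  refine ⟨h12, ⟨hvert, h01, fun x hx hxL => hcan1 x hx (hsub hxL)⟩,
    ⟨S, hS.trans (stdLattice_subset_dualLattice hsub), hpolar⟩, h0P, fun y hy hyL => ?_⟩
  exact eq_zero_of_mem_interior_polar_of_mem_dualLattice hvert h01
    (interior_mono (polar_anti h12) hy) hyL

/-- A good pair `(Δ₁, Δ₂)` over `M` remains a good pair over a
finite-index sublattice `M' ⊆ M` whose points contain the vertices of `Δ₁`,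
with the polar taken with respect to the dual lattice `N' ⊇ N`. -/
theorem stmt7 (Δ₁ Δ₂ : Set (Fin d → ℝ)) (L' : Set (Fin d → ℝ))
    (hsub : L' ⊆ stdLattice d)
    (hsubgrp : ∃ H : AddSubgroup (Fin d → ℝ), (H : Set (Fin d → ℝ)) = L')
    (hfin : ∀ x ∈ stdLattice d, ∃ k : ℕ, 0 < k ∧ (k : ℝ) • x ∈ L')
    (hgood : IsGoodPairIn (stdLattice d) (stdLattice d) Δ₁ Δ₂)
    (hvert : IsLatticePolytopeIn L' Δ₁) :
    IsGoodPairIn L' (dualLattice L') Δ₁ Δ₂ :=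
  stmt7_general Δ₁ Δ₂ L' hsub hgood hvert
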